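/- arXiv:1710.04902 — 3 statements merged into one kernel-verified Lean document; each statement's English description precedes it below -/
import Mathlib

section
/- Let f, g ∈ Homeo⁺(S¹) have rational rotation numbers and suppose Per(f) ∩ Per(g) = ∅. Then the set S¹ ∖ (Per(f) ∪ Per(g)) contains only finitely many connected components bounded on one side by a point of Per(f) and on the other side by a point of Per(g); moreover the number of components of type (f,g) (left endpoint in Per(f), right endpoint in Per(g)) equals the number of components of type (g,f), and these alternate around the circle. -/
open Set Function Filter MeasureTheory

/-- An orientation-preserving homeomorphism of `ℝ` commuting with `x ↦ x + 1`,
i.e. a lift of an orientation-preserving circle homeomorphism. -/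
structure HomeoZR : Type where
  toFun : ℝ → ℝ
  invFun : ℝ → ℝ
  left_inv : Function.LeftInverse invFun toFun
  right_inv : Function.RightInverse invFun toFun
  strictMono : StrictMono toFun
  map_add_one : ∀ x, toFun (x + 1) = toFun x + 1

namespace HomeoZR

/-- The identity. -/
protected def id : HomeoZR :=
  ⟨_root_.id, _root_.id, fun _ => rfl, fun _ => rfl, strictMono_id, fun _ => rfl⟩

/-- Composition `f ∘ g`. -/
protected def comp (f g : HomeoZR) : HomeoZR where
  toFun := f.toFun ∘ g.toFun
  invFun := g.invFun ∘ f.invFun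
  left_inv := fun x => by
    show g.invFun (f.invFun (f.toFun (g.toFun x))) = x
    rw [f.left_inv, g.left_inv]
  right_inv := fun x => by
    show f.toFun (g.toFun (g.invFun (f.invFun x))) = x
    rw [g.right_inv, f.right_inv]
  strictMono := f.strictMono.comp g.strictMono
  map_add_one := fun x => by
    show f.toFun (g.toFun (x + 1)) = f.toFun (g.toFun x) + 1
    rw [g.map_add_one, f.map_add_one]

/-- Inverse. -/
protected def symm (f : HomeoZR) : HomeoZR where
  toFun := f.invFun
  invFun := f.toFun
  left_inv := f.right_inv
  right_inv := f.left_inv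
  strictMono := by
    intro x y hxy
    rcases lt_trichotomy (f.invFun x) (f.invFun y) with h | h | h
    · exact h
    · exact absurd (by rw [← f.right_inv x, ← f.right_inv y, h]) (ne_of_lt hxy)
    · have h2 := f.strictMono h
      rw [f.right_inv, f.right_inv] at h2
      exact absurd h2 (lt_asymm hxy)
  map_add_one := fun x => by
    have h1 : f.invFun (f.toFun (f.invFun x + 1)) = f.invFun (x + 1) := by
      rw [f.map_add_one, f.right_inv]
    rw [f.left_inv] at h1
    exact h1.symm

/-- The associated monotone degree-one lift. -/
def toLift (f : HomeoZR) : CircleDeg1Lift :=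
  ⟨⟨f.toFun, f.strictMono.monotone⟩, f.map_add_one⟩

/-- The translation number `rot̃(f)`. -/
noncomputable def transNum (f : HomeoZR) : ℝ :=
  f.toLift.translationNumber

/-- The canonical lift of the underlying circle homeomorphism: the lift whose
translation number lies in `[0,1)`, as a plain function. -/
noncomputable def canon (f : HomeoZR) : ℝ → ℝ :=
  fun x => f.toFun x - (⌊f.transNum⌋ : ℝ)

/-- The periodic points of the underlying circle homeomorphism, as a
`ℤ`-periodic subset of `ℝ`. -/
def Per (f : HomeoZR) : Set ℝ :=
  {x | ∃ n : ℕ, 0 < n ∧ ∃ m : ℤ, f.toFun^[n] x = x + m}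

/-- The fixed points of the underlying circle homeomorphism, as a subset of `ℝ`. -/
def FixS (f : HomeoZR) : Set ℝ :=
  {x | ∃ m : ℤ, f.toFun x = x + m}

/-- `q(f)`: the minimal period of the underlying circle homeomorphism. -/
noncomputable def q (f : HomeoZR) : ℕ :=
  sInf {n : ℕ | 0 < n ∧ ∃ x : ℝ, ∃ m : ℤ, f.toFun^[n] x = x + m}

/-- `p(f)`: the least `p ≥ 0` with `rot(f) = p / q(f)` mod `ℤ`. -/
noncomputable def p (f : HomeoZR) : ℕ :=
  sInf {p : ℕ | ∃ m : ℤ, f.transNum = (p : ℝ) / (f.q : ℝ) + (m : ℝ)}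

/-- Natural powers. -/
protected def npow (f : HomeoZR) : ℕ → HomeoZR
  | 0 => HomeoZR.id
  | n + 1 => (f.npow n).comp f

/-- Integer powers. -/
protected def zpow (f : HomeoZR) (k : ℤ) : HomeoZR :=
  if 0 ≤ k then f.npow k.toNat else f.symm.npow (-k).toNat

end HomeoZR

/-- `f` has rational rotation number. -/
def RatRot (f : HomeoZR) : Prop := ∃ r : ℚ, f.transNum = (r : ℝ)

/-- `F` is a positive one-parameter family (one-parameter group) commuting with `f`:
for `t ≠ 0` the fixed set of `F t` is the frontier of `Per f`, and for `t > 0` the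
canonical lift of `F t` moves every point off the frontier strictly to the right. -/
def PosFamily (f : HomeoZR) (F : ℝ → HomeoZR) : Prop :=
  (∀ s t, (F (s + t)).toFun = (F s).toFun ∘ (F t).toFun) ∧
  (∀ t, (F t).toFun ∘ f.toFun = f.toFun ∘ (F t).toFun) ∧
  (∀ t, t ≠ 0 → (F t).FixS = frontier f.Per) ∧
  (∀ t, 0 < t → ∀ x, x ∉ frontier f.Per → x < (F t).canon x)

/-- `δ_{f,g}(x,t)`, where `F` is a positive one-parameter family commuting with `f`. -/
noncomputable def delta (F : ℝ → HomeoZR) (g : HomeoZR) (x t : ℝ) : ℝ :=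
  ((F t).canon ∘ g.canon)^[g.q] x - x - (g.p : ℝ)

/-- Persistent periodic points. -/
def Pset (F : ℝ → HomeoZR) (g : HomeoZR) : Set ℝ := {x | ∀ t, delta F g x t = 0}

/-- Never-periodic points. -/
def Nset (F : ℝ → HomeoZR) (g : HomeoZR) : Set ℝ := {x | ∀ t, delta F g x t ≠ 0}

/-- Points periodic at a unique time. -/
def Uset (F : ℝ → HomeoZR) (g : HomeoZR) : Set ℝ := {x | ∃! t, delta F g x t = 0}

/-- `x` has a finite orbit in the circle under the group generated by `f` and `g`. -/
def FiniteOrbit (f g : HomeoZR) (x : ℝ) : Prop :=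
  ∃ S : Set ℝ, S.Finite ∧ x ∈ S ∧
    (∀ y ∈ S, ∃ z ∈ S, ∃ m : ℤ, f.toFun y = z + m) ∧
    (∀ y ∈ S, ∃ z ∈ S, ∃ m : ℤ, g.toFun y = z + m)

/-- `τ(f_1, …, f_n) = rot̃(f_n ∘ ⋯ ∘ f_1) − Σ rot̃(f_i)`. -/
noncomputable def tau (L : List HomeoZR) : ℝ :=
  (L.foldl (fun h u => u.comp h) HomeoZR.id).transNum
    - (L.map HomeoZR.transNum).sum

/-- An interval of type `(f,g)`: a connected component of the complement of
`Per f ∪ Per g` whose left endpoint lies in `Per f` and right endpoint in `Per g`,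
recorded by its pair of endpoints (as lifts in `ℝ`). -/
def typeInterval (f g : HomeoZR) : Set (ℝ × ℝ) :=
  {p | p.1 < p.2 ∧ p.1 ∈ f.Per ∧ p.2 ∈ g.Per ∧
    Set.Ioo p.1 p.2 ∩ (f.Per ∪ g.Per) = ∅}

/-! The sets `A = Per f` and `B = Per g` are closed, nonempty, disjoint and invariant under
`x ↦ x + 1`. Compactness of a fundamental domain gives a uniform distance `ε > 0` between `A`
and `B`, so the mixed gaps (the intervals of type `(A,B)` or `(B,A)`) have length at least `ε`.
Their left endpoints therefore form a discrete `1`-periodic subset of `ℝ`, which is order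
isomorphic to `ℤ`. Between two consecutive gaps of the same type there would be a gap of the
other type, so the types alternate along this enumeration; translation by `1` is a shift by some
`N`, and since it preserves types, `N` is even. -/

lemma Int.eq_add_of_strictMono_of_surjective {φ : ℤ → ℤ} (hmono : StrictMono φ)
    (hsurj : Surjective φ) (k : ℤ) : φ k = k + φ 0 := by
  have step : ∀ k, φ (k + 1) = φ k + 1 := fun k => by
    obtain ⟨j, hj⟩ := hsurj (φ k + 1)
    have h1 : k < j := hmono.lt_iff_lt.1 (by omega)
    have h2 : φ (k + 1) ≤ φ j := hmono.monotone (by omega)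
    have := hmono (lt_add_one k)
    omega
  induction k using Int.induction_on with
  | zero => simp
  | succ k ih => rw [step, ih]; ring
  | pred k ih => have := step (-(k : ℤ) - 1); rw [sub_add_cancel] at this; omega

lemma Int.iff_even_of_iff_not {P : ℤ → Prop} (h0 : P 0) (h : ∀ k, P (k + 1) ↔ ¬ P k) (k : ℤ) :
    P k ↔ Even k := by
  induction k using Int.induction_on with
  | zero => simpa using h0
  | succ k ih => rw [h, ih, Int.even_add_one]
  | pred k ih =>
    have := h (-(k : ℤ) - 1)
    rw [sub_add_cancel] at this
    rw [Int.even_sub_one, ← ih]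
    tauto

lemma OrderIso.not_lt_lt_add_one {α : Type*} [Preorder α] (e : ℤ ≃o α) (k : ℤ) (a : α) :
    ¬ (e k < a ∧ a < e (k + 1)) := by
  rw [← e.apply_symm_apply a, e.lt_iff_lt, e.lt_iff_lt]
  omega

lemma finite_inter_Icc_of_forall_add_le {S : Set ℝ} {ε : ℝ} (hε : 0 < ε)
    (hS : ∀ x ∈ S, ∀ y ∈ S, x < y → x + ε ≤ y) (a b : ℝ) : (S ∩ Icc a b).Finite := by
  refine Finite.of_finite_image (f := fun x => ⌊x / ε⌋)
    ((finite_Icc ⌊a / ε⌋ ⌊b / ε⌋).subset ?_) fun x hx y hy hxy => ?_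
  · rintro _ ⟨x, ⟨-, hax, hxb⟩, rfl⟩
    exact ⟨Int.floor_mono (by gcongr), Int.floor_mono (by gcongr)⟩
  · have key : ∀ {u v}, u ∈ S → v ∈ S → u < v → ⌊u / ε⌋ < ⌊v / ε⌋ := fun {u v} hu hv huv => by
      have h : u / ε + 1 ≤ v / ε := by
        rw [div_add_one hε.ne', div_le_div_iff_of_pos_right hε]
        exact hS u hu v hv huv
      have := Int.floor_mono h
      rw [Int.floor_add_one] at this
      omega
    simp only at hxy
    rcases lt_trichotomy x y with h | h | h
    · exact absurd hxy (key hx.1 hy.1 h).ne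
    · exact h
    · exact absurd hxy (key hy.1 hx.1 h).ne'

lemma nonempty_orderIso_int {S : Set ℝ} (hne : S.Nonempty) (hmax : ∀ x ∈ S, ∃ y ∈ S, x < y)
    (hmin : ∀ x ∈ S, ∃ y ∈ S, y < x) (hfin : ∀ a b, (S ∩ Icc a b).Finite) :
    Nonempty (ℤ ≃o S) := by
  have : LocallyFiniteOrder S := .ofFiniteIcc fun a b =>
    ((hfin a b).preimage Subtype.val_injective.injOn).subset fun x hx => ⟨x.2, hx⟩
  have : NoMaxOrder S := ⟨fun x => let ⟨y, hy, hxy⟩ := hmax x x.2; ⟨⟨y, hy⟩, hxy⟩⟩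
  have : NoMinOrder S := ⟨fun x => let ⟨y, hy, hxy⟩ := hmin x x.2; ⟨⟨y, hy⟩, hxy⟩⟩
  have : Nonempty S := hne.to_subtype
  let _ : SuccOrder S := LinearLocallyFiniteOrder.succOrder S
  let _ : PredOrder S := LinearLocallyFiniteOrder.predOrder S
  exact ⟨orderIsoIntOfLinearSuccPredArch.symm⟩

lemma exists_pos_orderIso_add_eq_add_one {S : Set ℝ} (hS : ∀ x ∈ S, x + 1 ∈ S)
    (hS' : ∀ x ∈ S, x - 1 ∈ S) (e : ℤ ≃o S) :
    ∃ N : ℤ, 0 < N ∧ ∀ k, (e (k + N) : ℝ) = e k + 1 := by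
  set φ : ℤ → ℤ := fun k => e.symm ⟨e k + 1, hS _ (e k).2⟩
  have hmono : StrictMono φ := fun j k hjk =>
    e.symm.strictMono (Subtype.mk_lt_mk.2 (by simpa using e.strictMono hjk))
  have hsurj : Surjective φ := fun j => ⟨e.symm ⟨e j - 1, hS' _ (e j).2⟩, by simp [φ]⟩
  have heq : ∀ k, (e (k + φ 0) : ℝ) = e k + 1 := fun k => by
    have := congrArg (fun k => (e k : ℝ)) (Int.eq_add_of_strictMono_of_surjective hmono hsurj k)
    simpa [φ] using this.symm
  have h0 : e 0 < e (0 + φ 0) := Subtype.coe_lt_coe.1 (by rw [heq]; exact lt_add_one _)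
  exact ⟨φ 0, by simpa using e.lt_iff_lt.1 h0, heq⟩

lemma exists_pos_le_abs_sub {A B : Set ℝ} (hA : IsClosed A) (hB : IsClosed B)
    (hAB : Disjoint A B) (hA1 : Periodic (· ∈ A) 1) (hB1 : Periodic (· ∈ B) 1) :
    ∃ ε > 0, ∀ a ∈ A, ∀ b ∈ B, ε ≤ |b - a| := by
  obtain ⟨r, hr, hsep⟩ := Metric.exists_pos_forall_lt_edist (isCompact_Icc.inter_left hA) hB
    (hAB.mono_left inter_subset_left)
  refine ⟨r, hr, fun a ha b hb => ?_⟩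
  have ha' : a - ⌊a⌋ ∈ A ∩ Icc 0 1 :=
    ⟨by simpa using (hA1.sub_int_mul_eq ⌊a⌋).to_iff.2 ha, Int.fract_nonneg a,
      (Int.fract_lt_one a).le⟩
  have hb' : b - ⌊a⌋ ∈ B := by simpa using (hB1.sub_int_mul_eq ⌊a⌋).to_iff.2 hb
  have := hsep _ ha' _ hb'
  rw [edist_nndist, ENNReal.coe_lt_coe, ← NNReal.coe_lt_coe, coe_nndist, Real.dist_eq] at this
  rw [show a - ⌊a⌋ - (b - ⌊a⌋) = -(b - a) by ring, abs_neg] at this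
  exact this.le

-- `typeInterval f g` is `Gap f.Per g.Per` by definition.
def Gap (A B : Set ℝ) : Set (ℝ × ℝ) :=
  {p | p.1 < p.2 ∧ p.1 ∈ A ∧ p.2 ∈ B ∧ Ioo p.1 p.2 ∩ (A ∪ B) = ∅}

noncomputable def gapAt (C : Set ℝ) (x : ℝ) : ℝ × ℝ := (x, sInf (C ∩ Ioi x))

section Gap

variable {A B : Set ℝ} {p : ℝ × ℝ} {c : ℝ}

@[simp] lemma fst_gapAt (C : Set ℝ) (x : ℝ) : (gapAt C x).1 = x := rfl

lemma Gap.snd_le (hp : p ∈ Gap A B) {x : ℝ} (hx : x ∈ A ∪ B) (h : p.1 < x) : p.2 ≤ x :=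
  not_lt.1 fun h' => (eq_empty_iff_forall_notMem.1 hp.2.2.2 x) ⟨⟨h, h'⟩, hx⟩

lemma Gap.gapAt_eq (hp : p ∈ Gap A B) : gapAt (A ∪ B) p.1 = p :=
  Prod.ext rfl <| IsLeast.csInf_eq ⟨⟨Or.inr hp.2.2.1, hp.1⟩, fun _ hx => Gap.snd_le hp hx.1 hx.2⟩

lemma mem_gap_add_iff (hA : Periodic (· ∈ A) c) (hB : Periodic (· ∈ B) c) :
    (p.1 + c, p.2 + c) ∈ Gap A B ↔ p ∈ Gap A B := by
  have hIoo : Ioo (p.1 + c) (p.2 + c) ∩ (A ∪ B) = (· + c) '' (Ioo p.1 p.2 ∩ (A ∪ B)) := by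
    ext z
    have hAB : z + -c ∈ A ∪ B ↔ z ∈ A ∪ B := by
      simpa using (or_congr (hA (z + -c)).to_iff (hB (z + -c)).to_iff).symm
    simp only [image_add_right, mem_preimage, mem_inter_iff, mem_Ioo, hAB]
    constructor <;> rintro ⟨⟨h1, h2⟩, h3⟩ <;> exact ⟨⟨by linarith, by linarith⟩, h3⟩
  simp only [Gap, mem_ofPred_eq, add_lt_add_iff_right, hA p.1, hB p.2, hIoo, image_eq_empty]

lemma exists_gap_between (hA : IsClosed A) (hB : IsClosed B) (hAB : Disjoint A B) {a b : ℝ}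
    (ha : a ∈ A) (hb : b ∈ B) (hab : a ≤ b) : ∃ p ∈ Gap A B, a ≤ p.1 ∧ p.2 ≤ b := by
  obtain ⟨b', ⟨hb'B, hab', hb'b⟩, hb'min⟩ :=
    (isCompact_Icc.inter_left hB).exists_isLeast ⟨b, hb, hab, le_rfl⟩
  obtain ⟨a', ⟨ha'A, haa', ha'b'⟩, ha'max⟩ :=
    (isCompact_Icc.inter_left hA).exists_isGreatest ⟨a, ha, le_rfl, hab'⟩
  refine ⟨(a', b'), ⟨ha'b'.lt_of_ne (hAB.ne_of_mem ha'A hb'B), ha'A, hb'B, ?_⟩, haa', hb'b⟩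
  refine eq_empty_iff_forall_notMem.2 fun z ⟨⟨h1, h2⟩, hz⟩ => hz.elim (fun hzA => ?_) fun hzB => ?_
  · exact (ha'max ⟨hzA, haa'.trans h1.le, h2.le⟩).not_gt h1
  · exact (hb'min ⟨hzB, haa'.trans h1.le, h2.le.trans hb'b⟩).not_gt h2

end Gap

def leftEnds (A B : Set ℝ) : Set ℝ := {x | gapAt (A ∪ B) x ∈ Gap A B ∪ Gap B A}

section leftEnds

variable {A B : Set ℝ} {p : ℝ × ℝ} {x y c : ℝ}

lemma leftEnds_comm : leftEnds A B = leftEnds B A := by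
  simp only [leftEnds, union_comm A B, union_comm (Gap A B)]

lemma Gap.fst_mem_leftEnds (hp : p ∈ Gap A B) : p.1 ∈ leftEnds A B := by
  simp only [leftEnds, mem_ofPred_eq, Gap.gapAt_eq hp, mem_union, hp, true_or]

lemma leftEnds_subset_union : leftEnds A B ⊆ A ∪ B := fun _ hx => hx.elim
  (fun h => Or.inl h.2.1) fun h => Or.inr h.2.1

lemma gapAt_mem_gap (hAB : Disjoint A B) (hx : x ∈ leftEnds A B) (hxA : x ∈ A) :
    gapAt (A ∪ B) x ∈ Gap A B :=
  hx.resolve_right fun h => hAB.ne_of_mem hxA h.2.1 rfl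

lemma gapAt_mem_gap_swap (hx : x ∈ leftEnds A B) (hxA : x ∉ A) : gapAt (A ∪ B) x ∈ Gap B A :=
  hx.resolve_left fun h => hxA h.2.1

lemma gapAt_snd_le (hx : x ∈ leftEnds A B) (hy : y ∈ A ∪ B) (hxy : x < y) :
    (gapAt (A ∪ B) x).2 ≤ y :=
  hx.elim (fun h => Gap.snd_le h hy hxy) fun h => Gap.snd_le h (union_comm A B ▸ hy) hxy

lemma add_mem_leftEnds (hA : Periodic (· ∈ A) c) (hB : Periodic (· ∈ B) c)
    (hx : x ∈ leftEnds A B) : x + c ∈ leftEnds A B := by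
  rcases hx with h | h
  · exact Gap.fst_mem_leftEnds ((mem_gap_add_iff hA hB).2 h)
  · exact leftEnds_comm ▸ Gap.fst_mem_leftEnds ((mem_gap_add_iff hB hA).2 h)

lemma gapAt_add (hA : Periodic (· ∈ A) c) (hB : Periodic (· ∈ B) c) (hx : x ∈ leftEnds A B) :
    gapAt (A ∪ B) (x + c) = ((gapAt (A ∪ B) x).1 + c, (gapAt (A ∪ B) x).2 + c) := by
  rcases hx with h | h
  · exact Gap.gapAt_eq ((mem_gap_add_iff hA hB).2 h)
  · exact union_comm A B ▸ Gap.gapAt_eq ((mem_gap_add_iff hB hA).2 h)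

lemma exists_mem_leftEnds_between (hA : IsClosed A) (hB : IsClosed B) (hAB : Disjoint A B)
    (hx : x ∈ leftEnds A B) (hxA : x ∈ A) (hyA : y ∈ A) (hxy : x < y) :
    ∃ z ∈ leftEnds A B, z ∈ B ∧ x < z ∧ z < y := by
  have hp := gapAt_mem_gap hAB hx hxA
  have hle := gapAt_snd_le hx (Or.inl hyA) hxy
  obtain ⟨q, hq, h1, h2⟩ := exists_gap_between hB hA hAB.symm hp.2.2.1 hyA hle
  exact ⟨q.1, leftEnds_comm ▸ Gap.fst_mem_leftEnds hq, hq.2.1, hp.1.trans_le h1, hq.1.trans_le h2⟩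

end leftEnds

section Alternation

variable {A B : Set ℝ}

lemma exists_pos_forall_add_le_of_mem_leftEnds (hA : IsClosed A) (hB : IsClosed B)
    (hAB : Disjoint A B) (hA1 : Periodic (· ∈ A) 1) (hB1 : Periodic (· ∈ B) 1) :
    ∃ ε > 0, ∀ x ∈ leftEnds A B, ∀ y ∈ leftEnds A B, x < y → x + ε ≤ y := by
  obtain ⟨ε, hε, hsep⟩ := exists_pos_le_abs_sub hA hB hAB hA1 hB1
  refine ⟨ε, hε, fun x hx y hy hxy => le_trans ?_ (gapAt_snd_le hx (leftEnds_subset_union hy) hxy)⟩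
  rcases hx with h | h
  · have := hsep _ h.2.1 _ h.2.2.1
    rw [abs_of_pos (sub_pos.2 h.1), fst_gapAt] at this
    linarith
  · have := hsep _ h.2.2.1 _ h.2.1
    rw [abs_of_neg (sub_neg.2 h.1), fst_gapAt] at this
    linarith

lemma nonempty_gap (hA : IsClosed A) (hB : IsClosed B) (hAB : Disjoint A B)
    (hB1 : Periodic (· ∈ B) 1) (hAne : A.Nonempty) (hBne : B.Nonempty) : (Gap A B).Nonempty := by
  obtain ⟨a, ha⟩ := hAne
  obtain ⟨b, hb⟩ := hBne
  have hb' : b + (⌈a - b⌉ : ℤ) ∈ B := by simpa using (hB1.int_mul ⌈a - b⌉ b).to_iff.2 hb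
  obtain ⟨p, hp, -⟩ := exists_gap_between hA hB hAB ha hb' (by linarith [Int.le_ceil (a - b)])
  exact ⟨p, hp⟩

lemma exists_orderIso_leftEnds (hA : IsClosed A) (hB : IsClosed B) (hAB : Disjoint A B)
    (hA1 : Periodic (· ∈ A) 1) (hB1 : Periodic (· ∈ B) 1) (hAne : A.Nonempty)
    (hBne : B.Nonempty) : ∃ e : ℤ ≃o leftEnds A B, (e 0 : ℝ) ∈ A := by
  obtain ⟨p, hp⟩ := nonempty_gap hA hB hAB hB1 hAne hBne
  obtain ⟨ε, hε, hsep⟩ := exists_pos_forall_add_le_of_mem_leftEnds hA hB hAB hA1 hB1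
  obtain ⟨e⟩ := nonempty_orderIso_int ⟨p.1, Gap.fst_mem_leftEnds hp⟩
    (fun x hx => ⟨x + 1, add_mem_leftEnds hA1 hB1 hx, lt_add_one x⟩)
    (fun x hx => ⟨x + -1, add_mem_leftEnds hA1.neg hB1.neg hx, by linarith⟩)
    (finite_inter_Icc_of_forall_add_le hε hsep)
  refine ⟨(OrderIso.addRight (e.symm ⟨p.1, Gap.fst_mem_leftEnds hp⟩)).trans e, ?_⟩
  simpa using hp.2.1

lemma mem_iff_even_of_orderIso_leftEnds (hA : IsClosed A) (hB : IsClosed B) (hAB : Disjoint A B)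
    (e : ℤ ≃o leftEnds A B) (he0 : (e 0 : ℝ) ∈ A) (k : ℤ) : (e k : ℝ) ∈ A ↔ Even k := by
  have hlt : ∀ k, (e k : ℝ) < e (k + 1) := fun k => e.strictMono (lt_add_one k)
  have hB' : ∀ j, (e j : ℝ) ∉ A → (e j : ℝ) ∈ B := fun j hj =>
    (leftEnds_subset_union (e j).2).resolve_left hj
  refine Int.iff_even_of_iff_not (P := fun j => (e j : ℝ) ∈ A) he0
    (fun j => ⟨fun h hj => ?_, fun hj => by_contra fun h => ?_⟩) k
  · obtain ⟨z, hz, -, h1, h2⟩ := exists_mem_leftEnds_between hA hB hAB (e j).2 hj h (hlt j)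
    exact e.not_lt_lt_add_one j ⟨z, hz⟩ ⟨h1, h2⟩
  · obtain ⟨z, hz, -, h1, h2⟩ := exists_mem_leftEnds_between hB hA hAB.symm
      (leftEnds_comm ▸ (e j).2) (hB' j hj) (hB' _ h) (hlt j)
    exact e.not_lt_lt_add_one j ⟨z, leftEnds_comm ▸ hz⟩ ⟨h1, h2⟩

theorem exists_alternating_enumeration_gap (hA : IsClosed A) (hB : IsClosed B)
    (hAB : Disjoint A B) (hA1 : Periodic (· ∈ A) 1) (hB1 : Periodic (· ∈ B) 1)
    (hAne : A.Nonempty) (hBne : B.Nonempty) :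
    ∃ ℓ : ℕ, 0 < ℓ ∧ ∃ I : ℤ → ℝ × ℝ,
      (∀ k : ℤ, (I k).1 < (I k).2) ∧
      (∀ k : ℤ, (I k).2 ≤ (I (k + 1)).1) ∧
      (∀ k : ℤ, I (k + 2 * (ℓ : ℤ)) = ((I k).1 + 1, (I k).2 + 1)) ∧
      (∀ k : ℤ, Even k → I k ∈ Gap A B) ∧
      (∀ k : ℤ, Odd k → I k ∈ Gap B A) ∧
      (∀ p ∈ Gap A B, ∃ k : ℤ, Even k ∧ I k = p) ∧
      (∀ p ∈ Gap B A, ∃ k : ℤ, Odd k ∧ I k = p) := by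
  obtain ⟨e, he0⟩ := exists_orderIso_leftEnds hA hB hAB hA1 hB1 hAne hBne
  obtain ⟨N, hN, heN⟩ := exists_pos_orderIso_add_eq_add_one
    (fun _ => add_mem_leftEnds hA1 hB1)
    (fun _ hx => by simpa [sub_eq_add_neg] using add_mem_leftEnds hA1.neg hB1.neg hx) e
  have hcol := mem_iff_even_of_orderIso_leftEnds hA hB hAB e he0
  obtain ⟨ℓ, hℓ⟩ : Even N := by
    rw [← hcol, ← zero_add N, heN]
    exact (hA1 _).to_iff.2 he0
  lift ℓ to ℕ using (by omega)
  refine ⟨ℓ, by omega, fun k => gapAt (A ∪ B) (e k), fun k => ?_, fun k => ?_, fun k => ?_,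
    fun k hk => ?_, fun k hk => ?_, fun p hp => ?_, fun p hp => ?_⟩
  · exact (e k).2.elim (fun h => h.1) fun h => h.1
  · exact gapAt_snd_le (e k).2 (leftEnds_subset_union (e (k + 1)).2) (e.strictMono (lt_add_one k))
  · simp only [show k + 2 * (ℓ : ℤ) = k + N by omega, heN, gapAt_add hA1 hB1 (e k).2]
  · exact gapAt_mem_gap hAB (e k).2 ((hcol k).2 hk)
  · exact gapAt_mem_gap_swap (e k).2 fun h => Int.not_even_iff_odd.2 hk ((hcol k).1 h)
  · refine ⟨e.symm ⟨p.1, Gap.fst_mem_leftEnds hp⟩, (hcol _).1 (by simpa using hp.2.1), ?_⟩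
    simpa using Gap.gapAt_eq hp
  · refine ⟨e.symm ⟨p.1, leftEnds_comm ▸ Gap.fst_mem_leftEnds hp⟩, ?_, ?_⟩
    · rw [← Int.not_even_iff_odd, ← hcol]
      simpa using hAB.notMem_of_mem_right hp.2.1
    · simpa [union_comm A B] using Gap.gapAt_eq hp

end Alternation

namespace HomeoZR

variable (f : HomeoZR)

lemma continuous_toFun : Continuous f.toFun :=
  f.strictMono.monotone.continuous_of_surjective fun y => ⟨f.invFun y, f.right_inv y⟩

lemma coe_toLift_pow (n : ℕ) : ⇑(f.toLift ^ n) = f.toFun^[n] := by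
  rw [CircleDeg1Lift.coe_pow]; rfl

lemma periodic_mem_Per : Periodic (· ∈ f.Per) 1 := fun x => by
  simp only [Per, mem_ofPred_eq, ← coe_toLift_pow, CircleDeg1Lift.map_add_one,
    add_right_comm x 1, add_left_inj]

lemma Per_eq_setOf {r : ℚ} (hr : f.transNum = r) :
    f.Per = {x | (f.toLift ^ r.den) x = x + r.num} := by
  ext x
  refine ⟨fun ⟨n, hn, m, hx⟩ => ?_, fun hx => ⟨r.den, r.pos, r.num, by rwa [← coe_toLift_pow]⟩⟩
  rw [← coe_toLift_pow] at hx
  have hτ : (m : ℝ) / n = r.num / r.den := by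
    rw [← f.toLift.translationNumber_of_map_pow_eq_add_int hx hn, ← Rat.cast_def]
    exact hr
  have hcross := (div_eq_div_iff (by positivity) (by positivity)).mp hτ
  have hiter : (f.toLift ^ r.den)^[n] x = x + n * r.num := by
    rw [← CircleDeg1Lift.coe_pow, ← pow_mul, mul_comm, pow_mul, CircleDeg1Lift.coe_pow,
      (f.toLift ^ n).iterate_eq_of_map_eq_add_int hx]
    linear_combination hcross
  exact ((f.toLift ^ r.den).iterate_pos_eq_iff hn).mp hiter

variable {f}

lemma isClosed_Per (hf : RatRot f) : IsClosed f.Per := by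
  obtain ⟨r, hr⟩ := hf
  rw [f.Per_eq_setOf hr, coe_toLift_pow]
  exact isClosed_eq (f.continuous_toFun.iterate _) (by fun_prop)

lemma nonempty_Per (hf : RatRot f) : f.Per.Nonempty := by
  obtain ⟨r, hr⟩ := hf
  obtain ⟨x, hx⟩ := (f.toLift.translationNumber_eq_rat_iff f.continuous_toFun r.pos).mp
    (by rw [← Rat.cast_def]; exact hr)
  exact ⟨x, r.den, r.pos, r.num, by rwa [← coe_toLift_pow]⟩

end HomeoZR

/-- If `Per f ∩ Per g = ∅` then there are finitely many intervals of
type `(f,g)` and of type `(g,f)` on the circle (`2ℓ` per fundamental domain), equal in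
number (`ℓ` each), and they alternate around the circle. -/
theorem alternating_type_intervals (f g : HomeoZR)
    (hf : RatRot f) (hg : RatRot g)
    (hdisj : f.Per ∩ g.Per = ∅) :
    ∃ ℓ : ℕ, 0 < ℓ ∧ ∃ I : ℤ → ℝ × ℝ,
      (∀ k : ℤ, (I k).1 < (I k).2) ∧
      (∀ k : ℤ, (I k).2 ≤ (I (k + 1)).1) ∧
      (∀ k : ℤ, I (k + 2 * (ℓ : ℤ)) = ((I k).1 + 1, (I k).2 + 1)) ∧
      (∀ k : ℤ, Even k → I k ∈ typeInterval f g) ∧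
      (∀ k : ℤ, Odd k → I k ∈ typeInterval g f) ∧
      (∀ p ∈ typeInterval f g, ∃ k : ℤ, Even k ∧ I k = p) ∧
      (∀ p ∈ typeInterval g f, ∃ k : ℤ, Odd k ∧ I k = p) :=
  exists_alternating_enumeration_gap (HomeoZR.isClosed_Per hf) (HomeoZR.isClosed_Per hg)
    (disjoint_iff_inter_eq_empty.2 hdisj) f.periodic_mem_Per g.periodic_mem_Per
    (HomeoZR.nonempty_Per hf) (HomeoZR.nonempty_Per hg)
end

section
/- For any discrete group Γ, the largest Hausdorff quotient of Hom(Γ, Homeo⁺(ℝ))/Homeo⁺(ℝ) (the quotient of the representation space, with compact-open topology, by the conjugation action) consists of a single point. Equivalently: for every representation ρ : Γ → Homeo⁺(ℝ), every finite symmetric set S ⊂ Γ, and every ε > 0, there exists h ∈ Homeo⁺(ℝ) such that |h∘ρ(s)∘h⁻¹(x) − x| < ε for all s ∈ S and x ∈ ℝ. -/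
/-! Choose a bi-infinite sequence `x : ℤ → ℝ` with gaps at least `1` such that every `ρ s`,
`s ∈ S`, satisfies `x (k - 1) ≤ ρ s (x k) ≤ x (k + 1)`; this is possible because each `ρ s` is
a monotone bijection of `ℝ`, so tends to `±∞` at `±∞`. Conjugating by the piecewise linear
homeomorphism sending `δ k` to `x k` turns each `ρ s` into a monotone map moving every point
`δ k` of the grid by at most `δ`, hence every point of `ℝ` by at most `2δ`. -/

open Set Function Filter MeasureTheory

theorem exists_int_chain {α : Type*} [Nonempty α] {R : α → α → Prop}
    (hup : ∀ a, ∃ b, R a b) (hdown : ∀ b, ∃ a, R a b) :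
    ∃ x : ℤ → α, ∀ k, R (x k) (x (k + 1)) := by
  choose up hup using hup
  choose down hdown using hdown
  let a := Classical.arbitrary α
  refine ⟨fun | (n : ℕ) => up^[n] a | .negSucc n => down^[n + 1] a, ?_⟩
  rintro (n | _ | n)
  · show R (up^[n] a) (up^[n + 1] a)
    exact iterate_succ_apply' up n a ▸ hup _
  · exact hdown a
  · show R (down^[n + 2] a) (down^[n + 1] a)
    exact iterate_succ_apply' down (n + 1) a ▸ hdown _

theorem exists_int_grid_of_tendsto {ι : Type*} (f : ι → ℝ → ℝ) (S : Finset ι)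
    (htop : ∀ i ∈ S, Tendsto (f i) atTop atTop) (hbot : ∀ i ∈ S, Tendsto (f i) atBot atBot) :
    ∃ x : ℤ → ℝ, ∀ k, x k + 1 ≤ x (k + 1) ∧
      ∀ i ∈ S, f i (x k) ≤ x (k + 1) ∧ x k ≤ f i (x (k + 1)) := by
  refine exists_int_chain (R := fun a b => a + 1 ≤ b ∧ ∀ i ∈ S, f i a ≤ b ∧ a ≤ f i b)
    (fun a => ?_) (fun b => ?_)
  · refine ((eventually_ge_atTop (a + 1)).and ((eventually_all_finset S).2 fun i hi => ?_)).exists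
    exact (eventually_ge_atTop (f i a)).and ((htop i hi).eventually (eventually_ge_atTop a))
  · refine ((eventually_le_atBot (b - 1)).and ((eventually_all_finset S).2 fun i hi => ?_)).exists
      |>.imp fun a ⟨hab, h⟩ => ⟨by linarith, h⟩
    exact ((hbot i hi).eventually (eventually_le_atBot b)).and (eventually_le_atBot (f i b))

theorem monotone_sub_intCast_of_add_one_le {x : ℤ → ℝ} (hx : ∀ k, x k + 1 ≤ x (k + 1)) :
    Monotone fun k : ℤ => x k - k :=
  monotone_int_of_le_succ fun k => by push_cast; linarith [hx k]

theorem tendsto_atTop_atTop_of_add_one_le {x : ℤ → ℝ} (hx : ∀ k, x k + 1 ≤ x (k + 1)) :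
    Tendsto x atTop atTop := by
  refine tendsto_atTop_mono' _ ?_
    (tendsto_atTop_add_const_left _ (x 0) tendsto_intCast_atTop_atTop)
  filter_upwards [eventually_ge_atTop 0] with k hk
  have := monotone_sub_intCast_of_add_one_le hx hk
  simp only [Int.cast_zero, sub_zero] at this
  linarith

theorem tendsto_atBot_atBot_of_add_one_le {x : ℤ → ℝ} (hx : ∀ k, x k + 1 ≤ x (k + 1)) :
    Tendsto x atBot atBot := by
  refine tendsto_atBot_mono' _ ?_
    (tendsto_atBot_add_const_left _ (x 0) (tendsto_intCast_atBot_iff.2 tendsto_id))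
  filter_upwards [eventually_le_atBot 0] with k hk
  have := monotone_sub_intCast_of_add_one_le hx hk
  simp only [Int.cast_zero, sub_zero, id] at this ⊢
  linarith

noncomputable def piecewiseLinear (x : ℤ → ℝ) (t : ℝ) : ℝ :=
  x ⌊t⌋ + Int.fract t * (x (⌊t⌋ + 1) - x ⌊t⌋)

@[simp]
theorem piecewiseLinear_intCast (x : ℤ → ℝ) (k : ℤ) : piecewiseLinear x k = x k := by
  simp [piecewiseLinear]

theorem piecewiseLinear_lt_floor_add_one {x : ℤ → ℝ} (hx : StrictMono x) (t : ℝ) :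
    piecewiseLinear x t < x (⌊t⌋ + 1) := by
  have := hx (Int.lt_succ ⌊t⌋)
  have := Int.fract_lt_one t
  unfold piecewiseLinear
  nlinarith

theorem floor_le_piecewiseLinear {x : ℤ → ℝ} (hx : StrictMono x) (t : ℝ) :
    x ⌊t⌋ ≤ piecewiseLinear x t := by
  have := hx (Int.lt_succ ⌊t⌋)
  have := Int.fract_nonneg t
  unfold piecewiseLinear
  nlinarith

theorem strictMono_piecewiseLinear {x : ℤ → ℝ} (hx : StrictMono x) :
    StrictMono (piecewiseLinear x) := by
  intro a b hab
  rcases (Int.floor_le_floor hab.le).eq_or_lt with hfl | hfl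
  · have hfr : Int.fract a < Int.fract b := by
      simpa only [Int.fract, hfl, sub_lt_sub_iff_right] using hab
    have := hx (Int.lt_succ ⌊a⌋)
    unfold piecewiseLinear
    rw [← hfl]
    nlinarith
  · calc piecewiseLinear x a < x (⌊a⌋ + 1) := piecewiseLinear_lt_floor_add_one hx a
      _ ≤ x ⌊b⌋ := hx.monotone hfl
      _ ≤ piecewiseLinear x b := floor_le_piecewiseLinear hx b

theorem surjective_piecewiseLinear {x : ℤ → ℝ} (hx : StrictMono x)
    (htop : Tendsto x atTop atTop) (hbot : Tendsto x atBot atBot) :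
    Surjective (piecewiseLinear x) := by
  intro y
  obtain ⟨k, hky, hmax⟩ : ∃ k, x k ≤ y ∧ ∀ j, x j ≤ y → j ≤ k := by
    obtain ⟨m, hm⟩ := (htop.eventually (eventually_gt_atTop y)).exists
    refine Int.exists_greatest_of_bdd ⟨m, fun j hj => ?_⟩
      (hbot.eventually (eventually_le_atBot y)).exists
    exact (hx.lt_iff_lt.1 (hj.trans_lt hm)).le
  have hyk : y < x (k + 1) := lt_of_not_ge fun h => by linarith [hmax _ h]
  have hgap : 0 < x (k + 1) - x k := sub_pos.2 (hx (Int.lt_succ k))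
  set r := (y - x k) / (x (k + 1) - x k)
  have hr0 : 0 ≤ r := div_nonneg (sub_nonneg.2 hky) hgap.le
  have hr1 : r < 1 := (div_lt_one hgap).2 (by linarith)
  have hfloor : ⌊(k : ℝ) + r⌋ = k := by
    rw [Int.floor_eq_iff]; constructor <;> linarith
  have hfract : Int.fract ((k : ℝ) + r) = r := by
    rw [add_comm, Int.fract_add_intCast, Int.fract_eq_self.2 ⟨hr0, hr1⟩]
  refine ⟨k + r, ?_⟩
  rw [piecewiseLinear, hfloor, hfract, div_mul_cancel₀ _ hgap.ne']
  ring

noncomputable def piecewiseLinearOrderIso {x : ℤ → ℝ} (hx : StrictMono x)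
    (htop : Tendsto x atTop atTop) (hbot : Tendsto x atBot atBot) : ℝ ≃o ℝ :=
  StrictMono.orderIsoOfSurjective _ (strictMono_piecewiseLinear hx)
    (surjective_piecewiseLinear hx htop hbot)

@[simp]
theorem piecewiseLinearOrderIso_intCast {x : ℤ → ℝ} (hx : StrictMono x)
    (htop : Tendsto x atTop atTop) (hbot : Tendsto x atBot atBot) (k : ℤ) :
    piecewiseLinearOrderIso hx htop hbot k = x k :=
  piecewiseLinear_intCast x k

theorem Monotone.abs_sub_le_two {g : ℝ → ℝ} (hg : Monotone g)
    (hint : ∀ k : ℤ, |g k - k| ≤ 1) (t : ℝ) : |g t - t| ≤ 2 := by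
  have hlo := abs_le.1 (hint ⌊t⌋)
  have hhi := abs_le.1 (hint (⌊t⌋ + 1))
  have hgt := hg (Int.floor_le t)
  have hgt' := hg (Int.lt_floor_add_one t).le
  have := Int.floor_le t
  have := Int.lt_floor_add_one t
  push_cast at hhi
  rw [abs_le]; constructor <;> linarith

theorem OrderIso.abs_conj_sub_le_two (X : ℝ ≃o ℝ) {f : ℝ → ℝ} (hf : Monotone f)
    (hup : ∀ k : ℤ, f (X k) ≤ X (k + 1)) (hdown : ∀ k : ℤ, X k ≤ f (X (k + 1))) (t : ℝ) :
    |X.symm (f (X t)) - t| ≤ 2 := by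
  refine (X.symm.monotone.comp (hf.comp X.monotone)).abs_sub_le_two
    (fun k => abs_le.2 ⟨?_, ?_⟩) t
  · have := X.le_symm_apply.2 (by simpa using hdown (k - 1))
    simp only [comp_apply]
    linarith
  · have := X.symm_apply_le.2 (hup k)
    simp only [comp_apply]
    linarith

theorem char_space_of_line_trivial_general (Γ : Type)
    (ρ : Γ → ℝ ≃ₜ ℝ)
    (hmono : ∀ γ : Γ, Monotone (ρ γ : ℝ → ℝ))
    (S : Finset Γ)
    (ε : ℝ) (hε : 0 < ε) :
    ∃ h : ℝ ≃ₜ ℝ, Monotone (h : ℝ → ℝ) ∧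
      ∀ s ∈ S, ∀ x : ℝ, |h (ρ s (h.symm x)) - x| < ε := by
  obtain ⟨x, hx⟩ := exists_int_grid_of_tendsto (fun s => ρ s) S
    (fun s _ => (hmono s).tendsto_atTop_atTop fun b => ⟨(ρ s).symm b, by simp⟩)
    (fun s _ => (hmono s).tendsto_atBot_atBot fun b => ⟨(ρ s).symm b, by simp⟩)
  have hstep k := (hx k).1
  let X := piecewiseLinearOrderIso (strictMono_int_of_lt_succ fun k => by linarith [hstep k])
    (tendsto_atTop_atTop_of_add_one_le hstep) (tendsto_atBot_atBot_of_add_one_le hstep)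
  have hX (k : ℤ) : X (k + 1) = x (k + 1) := by
    rw [← Int.cast_one, ← Int.cast_add]; exact piecewiseLinearOrderIso_intCast ..
  obtain ⟨δ, hδ, hδε⟩ : ∃ δ, 0 < δ ∧ 2 * δ < ε := ⟨ε / 3, by positivity, by linarith⟩
  let h := X.symm.trans (OrderIso.mulLeft₀ δ hδ)
  refine ⟨h.toHomeomorph, h.monotone, fun s hs y => ?_⟩
  have hconj := X.abs_conj_sub_le_two (hmono s)
    (fun k => by simpa [X, hX] using ((hx k).2 s hs).1)
    (fun k => by simpa [X, hX] using ((hx k).2 s hs).2) (δ⁻¹ * y)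
  calc |h (ρ s (h.symm y)) - y| = |δ * (X.symm (ρ s (X (δ⁻¹ * y))) - δ⁻¹ * y)| := by
        simp [h, OrderIso.mulLeft₀_symm, mul_sub, hδ.ne']
    _ = δ * |X.symm (ρ s (X (δ⁻¹ * y))) - δ⁻¹ * y| := by rw [abs_mul, abs_of_pos hδ]
    _ ≤ δ * 2 := by gcongr
    _ < ε := by linarith

/-- Proposition 2.13. The character space `X(Γ, Homeo⁺(ℝ))` is a
single point: every action of `Γ` on `ℝ` by orientation-preserving homeomorphisms can
be conjugated, on any finite symmetric set and for any `ε > 0`, to be uniformly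
`ε`-close to the identity. -/
theorem char_space_of_line_trivial (Γ : Type) [Group Γ]
    (ρ : Γ → ℝ ≃ₜ ℝ)
    (hhom : ∀ a b : Γ, ∀ x : ℝ, ρ (a * b) x = ρ a (ρ b x))
    (hmono : ∀ γ : Γ, Monotone (ρ γ : ℝ → ℝ))
    (S : Finset Γ) (hsymm : ∀ s ∈ S, s⁻¹ ∈ S)
    (ε : ℝ) (hε : 0 < ε) :
    ∃ h : ℝ ≃ₜ ℝ, Monotone (h : ℝ → ℝ) ∧
      ∀ s ∈ S, ∀ x : ℝ, |h (ρ s (h.symm x)) - x| < ε :=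
  char_space_of_line_trivial_general Γ ρ hmono S ε hε
end

section
/- Let f, g ∈ Homeo⁺(S¹), suppose g has rational rotation number with Per(g) ≠ S¹, let g_t be a positive one-parameter family commuting with g, and assume P(g,f) has empty interior. Then for all but countably many t ∈ ℝ, the set Per(g_t∘f) has empty interior. -/
open Set Function Filter MeasureTheory

private lemma iterAddInt {k : ℝ → ℝ} (hk : ∀ (x : ℝ) (m : ℤ), k (x + m) = k x + m) :
    ∀ (n : ℕ) (x : ℝ) (m : ℤ), k^[n] (x + m) = k^[n] x + m := by
  intro n
  induction n with
  | zero => intro x m; simp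
  | succ n ih =>
    intro x m
    rw [Function.iterate_succ_apply, Function.iterate_succ_apply, hk, ih]

private lemma iterPeriodic {k : ℝ → ℝ} (hk : ∀ (x : ℝ) (m : ℤ), k (x + m) = k x + m)
    {n : ℕ} {x : ℝ} {m : ℤ} (h : k^[n] x = x + m) :
    ∀ c : ℕ, k^[n * c] x = x + ((c * m : ℤ) : ℝ) := by
  intro c
  induction c with
  | zero => simp
  | succ c ih =>
    have hnc : n * (c + 1) = n * c + n := by ring
    rw [hnc, Function.iterate_add_apply, h, iterAddInt hk, ih]
    push_cast; ring

/-- Lemma 5.18. If `P(g,f) = ⋂_t Per(g_t ∘ f)` has empty interior,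
then for all but countably many `t` the set `Per(g_t ∘ f)` has empty interior. -/
theorem Per_empty_interior_cocountable (f g : HomeoZR)
    (hg : RatRot g) (hper : g.Per ≠ Set.univ)
    (G : ℝ → HomeoZR) (hG : PosFamily g G)
    (hP : interior (⋂ t : ℝ, ((G t).comp f).Per) = ∅) :
    Set.Countable {t : ℝ | interior ((G t).comp f).Per ≠ ∅} := by
  classical
  obtain ⟨hGadd, hGcomm, hGfix, hGpos⟩ := hG
  have coeToLift : ∀ h : HomeoZR, ⇑h.toLift = h.toFun := fun h => rfl
  have mapAddInt : ∀ (h : HomeoZR) (x : ℝ) (m : ℤ), h.toFun (x + m) = h.toFun x + m := by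
    intro h x m
    have := h.toLift.map_add_int x m
    rwa [coeToLift] at this
  have hcont : ∀ h : HomeoZR, Continuous h.toFun := by
    intro h
    have hs : Function.Surjective h.toFun := h.right_inv.surjective
    have := (StrictMono.orderIsoOfSurjective h.toFun h.strictMono hs).continuous
    rwa [StrictMono.coe_orderIsoOfSurjective] at this
  -- `Per g` is nonempty
  have hPerNe : g.Per.Nonempty := by
    obtain ⟨r, hr⟩ := hg
    have hrr : g.toLift.translationNumber = (r.num : ℝ) / (r.den : ℝ) := by
      have : g.toLift.translationNumber = g.transNum := rfl
      rw [this, hr, Rat.cast_def]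
    have hcg : Continuous ⇑g.toLift := by rw [coeToLift]; exact hcont g
    obtain ⟨x, hx⟩ := ((g.toLift.translationNumber_eq_rat_iff hcg r.den_pos).mp hrr)
    refine ⟨x, r.den, r.den_pos, r.num, ?_⟩
    rw [← coeToLift g, ← CircleDeg1Lift.coe_pow]
    exact hx
  have perAdd : ∀ (x : ℝ) (m : ℤ), x ∈ g.Per → x + m ∈ g.Per := by
    rintro x m ⟨n, hn, m', hm'⟩
    exact ⟨n, hn, m', by rw [iterAddInt (mapAddInt g) n x m, hm']; ring⟩
  have frontierAdd : ∀ (x : ℝ) (m : ℤ), x ∈ frontier g.Per → x + m ∈ frontier g.Per := by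
    intro x m hx
    have hset : g.Per = (Homeomorph.addRight (m : ℝ)) ⁻¹' g.Per := by
      ext y
      simp only [Set.mem_preimage, Homeomorph.coe_addRight]
      constructor
      · intro hy; exact perAdd y m hy
      · intro hy
        have := perAdd (y + m) (-m) hy
        simpa using this
    have hfr : frontier g.Per = (Homeomorph.addRight (m : ℝ)) ⁻¹' frontier g.Per := by
      conv_lhs => rw [hset]
      exact ((Homeomorph.addRight (m : ℝ)).preimage_frontier g.Per).symm
    rw [hfr] at hx
    simpa using hx
  have hfrNe : (frontier g.Per).Nonempty := by
    rw [Set.nonempty_iff_ne_empty]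
    intro h
    rcases isClopen_iff.mp (isClopen_iff_frontier_eq_empty.mpr h) with h1 | h1
    · exact hPerNe.ne_empty h1
    · exact hper h1
  obtain ⟨x0, hx0⟩ := hfrNe
  have hG0 : ∀ x, (G 0).toFun x = x := by
    intro x
    have h := congrFun (hGadd 0 0) x
    rw [add_zero] at h
    exact ((G 0).strictMono.injective h).symm
  have hmu : ∀ u : ℝ, ∃ m : ℤ, (G u).toFun x0 = x0 + m := by
    intro u
    rcases eq_or_ne u 0 with rfl | hu
    · exact ⟨0, by rw [hG0]; simp⟩
    · have : x0 ∈ (G u).FixS := by rw [hGfix u hu]; exact hx0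
      exact this
  set μ : ℝ → ℤ := fun u => (hmu u).choose with hμdef
  have hμ : ∀ u, (G u).toFun x0 = x0 + μ u := fun u => (hmu u).choose_spec
  have hμ0 : (μ 0 : ℝ) = 0 := by
    have := hμ 0; rw [hG0] at this; linarith
  have htrans : ∀ u, (G u).transNum = (μ u : ℝ) := by
    intro u
    exact (G u).toLift.translationNumber_of_eq_add_int
      (by rw [coeToLift]; exact hμ u)
  have hcanon : ∀ u x, (G u).canon x = (G u).toFun x - μ u := by
    intro u x
    show (G u).toFun x - (⌊(G u).transNum⌋ : ℝ) = _
    rw [htrans u, Int.floor_intCast]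
  have hcanonAdd : ∀ u (x : ℝ) (m : ℤ), (G u).canon (x + m) = (G u).canon x + m := by
    intro u x m; rw [hcanon, hcanon, mapAddInt]; ring
  have hμadd : ∀ a b : ℝ, (μ (a + b) : ℝ) = μ a + μ b := by
    intro a b
    have h1 : (G (a + b)).toFun x0 = x0 + (μ (a + b) : ℝ) := hμ _
    have h2 : (G (a + b)).toFun x0 = x0 + ((μ a : ℝ) + μ b) := by
      rw [congrFun (hGadd a b) x0]
      show (G a).toFun ((G b).toFun x0) = _
      rw [hμ b, mapAddInt, hμ a]; ring
    have h3 := h1.symm.trans h2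
    linarith
  have hcanonComp : ∀ a b x, (G (a + b)).canon x = (G a).canon ((G b).canon x) := by
    intro a b x
    rw [hcanon, hcanon, hcanon, congrFun (hGadd a b) x]
    show (G a).toFun ((G b).toFun x) - (μ (a+b) : ℝ) = _
    have harg : (G b).toFun x - (μ b : ℝ) = (G b).toFun x + ((-μ b : ℤ) : ℝ) := by
      push_cast; ring
    rw [harg, mapAddInt, hμadd]
    push_cast; ring
  have hcanonFix : ∀ u (y : ℝ), y ∈ frontier g.Per → (G u).canon y = y := by
    intro u y hy
    rcases eq_or_ne u 0 with rfl | hu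
    · rw [hcanon, hG0, hμ0]; ring
    · have hyF : y ∈ (G u).FixS := by rw [hGfix u hu]; exact hy
      obtain ⟨m', hm'⟩ := hyF
      have hτ' : (G u).transNum = (m' : ℝ) :=
        (G u).toLift.translationNumber_of_eq_add_int (by rw [coeToLift]; exact hm')
      have hmm : (m' : ℝ) = (μ u : ℝ) := by rw [← hτ', htrans]
      rw [hcanon, hm', ← hmm]; ring
  have hcanonGe : ∀ u, 0 ≤ u → ∀ x, x ≤ (G u).canon x := by
    intro u hu x
    rcases hu.eq_or_lt with rfl | hu'
    · rw [hcanon, hG0, hμ0]; simp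
    · by_cases hx : x ∈ frontier g.Per
      · exact le_of_eq (hcanonFix u x hx).symm
      · exact le_of_lt (hGpos u hu' x hx)
  have hcanonSM : ∀ u, StrictMono (G u).canon := by
    intro u x y hxy
    rw [hcanon, hcanon]
    exact sub_lt_sub_right ((G u).strictMono hxy) _
  -- the key map `k u = canon (G u) ∘ f`
  set k : ℝ → ℝ → ℝ := fun u x => (G u).canon (f.toFun x) with hkdef
  have hkSM : ∀ u, StrictMono (k u) := fun u => (hcanonSM u).comp f.strictMono
  have hkAdd : ∀ u (x : ℝ) (m : ℤ), k u (x + m) = k u x + m := by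
    intro u x m
    show (G u).canon (f.toFun (x + m)) = (G u).canon (f.toFun x) + m
    rw [mapAddInt f, hcanonAdd]
  have hkDec : ∀ u v (x : ℝ), k v x = (G (v - u)).canon (k u x) := by
    intro u v x
    have h := hcanonComp (v - u) u (f.toFun x)
    have h2 : v - u + u = v := by ring
    rw [h2] at h
    exact h
  have hkIterMono : ∀ u v, u ≤ v → ∀ (n : ℕ) (x : ℝ), (k u)^[n] x ≤ (k v)^[n] x := by
    intro u v huv n
    induction n with
    | zero => intro x; simp
    | succ n ih =>
      intro x
      rw [Function.iterate_succ_apply', Function.iterate_succ_apply']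
      calc k u ((k u)^[n] x) ≤ k u ((k v)^[n] x) := (hkSM u).monotone (ih x)
        _ ≤ (G (v - u)).canon (k u ((k v)^[n] x)) := hcanonGe (v - u) (by linarith) _
        _ = k v ((k v)^[n] x) := (hkDec u v _).symm
  have hrigid : ∀ u v, u < v → ∀ (Q : ℕ) (x : ℝ) (a : ℤ), 0 < Q →
      (k u)^[Q] x = x + a → (k v)^[Q] x = x + a →
      ∀ j, 1 ≤ j → j ≤ Q → (k u)^[j] x ∈ frontier g.Per := by
    intro u v huv Q x a hQ hu hv j hj1 hjQ
    by_contra hnot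
    have hstrict : ∀ i, j ≤ i → (k u)^[i] x < (k v)^[i] x := by
      intro i hi
      induction i, hi using Nat.le_induction with
      | base =>
        obtain ⟨j', rfl⟩ : ∃ j', j = j' + 1 := ⟨j - 1, (Nat.succ_pred_eq_of_pos hj1).symm⟩
        rw [Function.iterate_succ_apply'] at hnot
        rw [Function.iterate_succ_apply', Function.iterate_succ_apply']
        calc k u ((k u)^[j'] x)
            < (G (v - u)).canon (k u ((k u)^[j'] x)) := hGpos (v - u) (by linarith) _ hnot
          _ ≤ (G (v - u)).canon (k u ((k v)^[j'] x)) :=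
              (hcanonSM (v - u)).monotone ((hkSM u).monotone (hkIterMono u v huv.le j' x))
          _ = k v ((k v)^[j'] x) := (hkDec u v _).symm
      | succ i hi ih =>
        rw [Function.iterate_succ_apply', Function.iterate_succ_apply']
        calc k u ((k u)^[i] x) < k u ((k v)^[i] x) := hkSM u ih
          _ ≤ (G (v - u)).canon (k u ((k v)^[i] x)) := hcanonGe (v - u) (by linarith) _
          _ = k v ((k v)^[i] x) := (hkDec u v _).symm
    have hlt := hstrict Q hjQ
    rw [hu, hv] at hlt
    exact lt_irrefl _ hlt
  have hext : ∀ u (Q : ℕ) (x : ℝ) (a : ℤ), 0 < Q → (k u)^[Q] x = x + a →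
      (∀ j, 1 ≤ j → j ≤ Q → (k u)^[j] x ∈ frontier g.Per) →
      ∀ j, 1 ≤ j → (k u)^[j] x ∈ frontier g.Per := by
    intro u Q x a hQ hperQ hfr0 j
    induction j using Nat.strong_induction_on with
    | _ j ih =>
      intro hj1
      by_cases hjQ : j ≤ Q
      · exact hfr0 j hj1 hjQ
      · push_neg at hjQ
        have hsub : j - Q + Q = j := Nat.sub_add_cancel hjQ.le
        have h1 : (k u)^[j] x = (k u)^[j - Q] x + a := by
          conv_lhs => rw [← hsub]
          rw [Function.iterate_add_apply, hperQ, iterAddInt (hkAdd u)]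
        rw [h1]
        exact frontierAdd _ a (ih (j - Q) (by omega) (by omega))
  have hallw : ∀ u (x : ℝ), (∀ j, 1 ≤ j → (k u)^[j] x ∈ frontier g.Per) →
      ∀ w (j : ℕ), (k w)^[j] x = (k u)^[j] x := by
    intro u x hfr w j
    induction j with
    | zero => rfl
    | succ j ih =>
      rw [Function.iterate_succ_apply', Function.iterate_succ_apply', ih,
        hkDec u w ((k u)^[j] x)]
      have hmem := hfr (j + 1) (by omega)
      rw [Function.iterate_succ_apply'] at hmem
      exact hcanonFix (w - u) _ hmem
  have hkAddOne : ∀ u (x : ℝ), k u (x + 1) = k u x + 1 := by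
    intro u x
    have := hkAdd u x 1
    push_cast at this
    exact this
  set K : ℝ → CircleDeg1Lift := fun u => ⟨⟨k u, (hkSM u).monotone⟩, hkAddOne u⟩ with hKdef
  have hKcoe : ∀ u, ⇑(K u) = k u := fun u => rfl
  have hτ : ∀ u (x : ℝ) (n : ℕ) (m : ℤ), 0 < n → (k u)^[n] x = x + m →
      (K u).translationNumber = (m : ℝ) / n := by
    intro u x n m hn h
    have h1 : (K u ^ n) x = x + m := by
      rw [show ⇑(K u ^ n) = (⇑(K u))^[n] from CircleDeg1Lift.coe_pow (K u) n, hKcoe]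
      exact h
    have h2 := (K u ^ n).translationNumber_of_eq_add_int h1
    rw [CircleDeg1Lift.translationNumber_pow] at h2
    rw [eq_div_iff (by exact_mod_cast hn.ne' : (n : ℝ) ≠ 0), mul_comm]
    exact h2
  have hPerChar : ∀ u (x : ℝ),
      x ∈ ((G u).comp f).Per ↔ ∃ n : ℕ, 0 < n ∧ ∃ m : ℤ, (k u)^[n] x = x + m := by
    intro u x
    have hAone : ∀ z : ℝ, ((G u).comp f).toFun z = k u z + (μ u : ℝ) := by
      intro z
      show (G u).toFun (f.toFun z) = (G u).canon (f.toFun z) + (μ u : ℝ)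
      rw [hcanon]; ring
    have hA : ∀ (n : ℕ) (y : ℝ),
        (((G u).comp f).toFun)^[n] y = (k u)^[n] y + (n : ℝ) * (μ u : ℝ) := by
      intro n
      induction n with
      | zero => intro y; simp
      | succ n ih =>
        intro y
        rw [Function.iterate_succ_apply', ih, hAone]
        have harg : (k u)^[n] y + (n : ℝ) * (μ u : ℝ)
            = (k u)^[n] y + ((n * μ u : ℤ) : ℝ) := by push_cast; ring
        rw [harg, hkAdd, ← Function.iterate_succ_apply' (k u) n y]
        push_cast; ring
    constructor
    · rintro ⟨n, hn, m, hm⟩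
      refine ⟨n, hn, m - n * μ u, ?_⟩
      have := hA n x
      push_cast
      linarith [hA n x, hm]
    · rintro ⟨n, hn, m, hm⟩
      refine ⟨n, hn, m + n * μ u, ?_⟩
      push_cast
      linarith [hA n x, hm]
  have hkey : ∀ t s : ℝ, t < s →
      (K t).translationNumber = (K s).translationNumber →
      ∀ x : ℝ, (∃ n : ℕ, 0 < n ∧ ∃ m : ℤ, (k t)^[n] x = x + m) →
      (∃ n : ℕ, 0 < n ∧ ∃ m : ℤ, (k s)^[n] x = x + m) →
      ∀ w, x ∈ ((G w).comp f).Per := by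
    intro t s hts hτeq x h1' h2' w
    obtain ⟨n1, hn1, m1, h1⟩ := h1'
    obtain ⟨n2, hn2, m2, h2⟩ := h2'
    have e1 := hτ t x n1 m1 hn1 h1
    have e2 := hτ s x n2 m2 hn2 h2
    have hmn : (m1 * n2 : ℤ) = m2 * n1 := by
      have hdd : (m1 : ℝ) / n1 = (m2 : ℝ) / n2 := by rw [← e1, ← e2, hτeq]
      rw [div_eq_div_iff (by exact_mod_cast hn1.ne' : (n1 : ℝ) ≠ 0)
        (by exact_mod_cast hn2.ne' : (n2 : ℝ) ≠ 0)] at hdd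
      exact_mod_cast hdd
    have hQ1 : (k t)^[n1 * n2] x = x + ((n2 * m1 : ℤ) : ℝ) := iterPeriodic (hkAdd t) h1 n2
    have hQ2 : (k s)^[n1 * n2] x = x + ((n2 * m1 : ℤ) : ℝ) := by
      have := iterPeriodic (hkAdd s) h2 n1
      rw [mul_comm n1 n2, this]
      congr 2
      calc (n1 : ℤ) * m2 = m2 * n1 := mul_comm _ _
        _ = m1 * n2 := hmn.symm
        _ = n2 * m1 := mul_comm _ _
    have hfr1 := hrigid t s hts (n1 * n2) x (n2 * m1) (Nat.mul_pos hn1 hn2) hQ1 hQ2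
    have hfr2 := hext t (n1 * n2) x (n2 * m1) (Nat.mul_pos hn1 hn2) hQ1 hfr1
    have hw := hallw t x hfr2 w n1
    rw [hPerChar]
    exact ⟨n1, hn1, m1, by rw [hw]; exact h1⟩
  -- choose data for each `t` in the bad set
  have hexists : ∀ t : {t : ℝ | interior ((G t).comp f).Per ≠ ∅},
      ∃ p : ℚ × ℚ × ℚ, p.2.1 < p.2.2 ∧
        Set.Ioo ((p.2.1 : ℝ)) ((p.2.2 : ℝ)) ⊆ ((G t.1).comp f).Per ∧
        (K t.1).translationNumber = (p.1 : ℝ) := by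
    rintro ⟨t, ht⟩
    simp only [Set.mem_setOf_eq] at ht
    obtain ⟨x, hx⟩ := Set.nonempty_iff_ne_empty.mpr ht
    obtain ⟨ε, hε, hball⟩ := Metric.isOpen_iff.mp isOpen_interior x hx
    rw [Real.ball_eq_Ioo] at hball
    obtain ⟨q1, hq1, hq1'⟩ := exists_rat_btwn (show x - ε < x by linarith)
    obtain ⟨q2, hq2, hq2'⟩ := exists_rat_btwn (show x < x + ε by linarith)
    have hIoo : Set.Ioo (q1 : ℝ) (q2 : ℝ) ⊆ ((G t).comp f).Per := by
      intro y hy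
      exact interior_subset (hball ⟨hq1.trans hy.1, hy.2.trans hq2'⟩)
    have hxPer : x ∈ ((G t).comp f).Per := interior_subset hx
    obtain ⟨n, hn, m, hm⟩ := (hPerChar t x).mp hxPer
    refine ⟨⟨(m : ℚ) / (n : ℚ), q1, q2⟩, ?_, hIoo, ?_⟩
    · exact_mod_cast hq1'.trans hq2
    · rw [hτ t x n m hn hm]; push_cast; ring
  choose ψ hψ1 hψ2 hψ3 using hexists
  have hinj : Function.Injective ψ := by
    have main : ∀ t' s' : {t : ℝ | interior ((G t).comp f).Per ≠ ∅},
        (t' : ℝ) < (s' : ℝ) → ψ t' = ψ s' → False := by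
      intro t' s' hlt hps
      have hτeq : (K (t' : ℝ)).translationNumber = (K (s' : ℝ)).translationNumber := by
        rw [hψ3 t', hψ3 s', hps]
      have hsub : Set.Ioo ((ψ t').2.1 : ℝ) ((ψ t').2.2 : ℝ)
          ⊆ ⋂ w : ℝ, ((G w).comp f).Per := by
        intro y hy
        have hyt : y ∈ ((G (t' : ℝ)).comp f).Per := hψ2 t' hy
        have hy' : y ∈ Set.Ioo ((ψ s').2.1 : ℝ) ((ψ s').2.2 : ℝ) := by
          rw [← hps]; exact hy
        have hys : y ∈ ((G (s' : ℝ)).comp f).Per := hψ2 s' hy'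
        rw [Set.mem_iInter]
        exact fun w => hkey _ _ hlt hτeq y ((hPerChar _ y).mp hyt) ((hPerChar _ y).mp hys) w
      have hsub2 : Set.Ioo ((ψ t').2.1 : ℝ) ((ψ t').2.2 : ℝ)
          ⊆ interior (⋂ w : ℝ, ((G w).comp f).Per) :=
        (isOpen_Ioo.subset_interior_iff).mpr hsub
      obtain ⟨y, hy⟩ := Set.nonempty_Ioo.mpr
        (show ((ψ t').2.1 : ℝ) < ((ψ t').2.2 : ℝ) by exact_mod_cast hψ1 t')
      have := hsub2 hy
      rw [hP] at this
      simp at this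
    intro t s h
    by_contra hne
    have hts : (t : ℝ) ≠ (s : ℝ) := fun hh => hne (Subtype.ext hh)
    rcases lt_or_gt_of_ne hts with hlt | hgt
    · exact main t s hlt h
    · exact main s t hgt h.symm
  have : Countable {t : ℝ | interior ((G t).comp f).Per ≠ ∅} := hinj.countable
  exact Set.countable_coe_iff.mp this
end
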